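/- Assume (p₀), (V_α), (G_β). There exist constants 0 < c ≤ C < ∞ such that for all x ∈ G and R ≥ 1, c·R^β ≤ E_x[T_{B(x,R)}] ≤ Σ_{y∈B(x,R)} λ_y g(x,y) ≤ C·R^β, where T_{B(x,R)} is the exit time of the ball B(x,R) and E_x[T_{B(x,R)}] = Σ_{y∈B(x,R)} λ_y g_{B(x,R)}(x,y). -/

import Mathlib

open scoped ENNReal

open Classical in
noncomputable def nstep {V : Type*} (p : V → V → ℝ) : ℕ → V → V → ℝ
  | 0, x, y => if x = y then 1 else 0
  | n + 1, x, y => ∑' z, nstep p n x z * p z y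

noncomputable def green {V : Type*} (p : V → V → ℝ) (lam : V → ℝ) (x y : V) : ℝ :=
  (1 / lam y) * ∑' n, nstep p n x y

open Classical in
noncomputable def killedKernel {V : Type*} (p : V → V → ℝ) (U : Set V) (x y : V) : ℝ :=
  if x ∈ U ∧ y ∈ U then p x y else 0

noncomputable def killedGreen {V : Type*} (p : V → V → ℝ) (lam : V → ℝ) (U : Set V) (x y : V) : ℝ :=
  (1 / lam y) * ∑' n, nstep (killedKernel p U) n x y

open Classical in
noncomputable def hitProb {V : Type*} (p : V → V → ℝ) (A : Set V) (x : V) : ℝ :=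
  ∑' n : ℕ, ∑' y : V, if y ∈ A then nstep (fun a b => if a ∈ A then 0 else p a b) n x y else 0

open Classical in
noncomputable def eqMeasure {V : Type*} (p : V → V → ℝ) (lam : V → ℝ) (A : Set V) (x : V) : ℝ :=
  if x ∈ A then lam x * (1 - ∑' y, p x y * hitProb p A y) else 0

noncomputable def capaE {V : Type*} (p : V → V → ℝ) (lam : V → ℝ) (A : Set V) : ℝ≥0∞ :=
  ∑' x : V, Set.indicator A (fun v => ENNReal.ofReal (eqMeasure p lam A v)) x

/-!
Write `g` for `green p lam`, `g_U` for `killedGreen p lam U` and `ν = α - β`. The middle inequality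
holds termwise, the killed kernel being dominated by `p`.

Everything else rests on a first-passage bound: if `g(z, y) ≤ M` for every `z` outside `U`, then
`g(x, y) ≤ g_U(x, y) + M` for `x ∈ U`, because a walk from `x` to `y` either stays in `U` or
restarts from its exit point. With `U = {y}ᶜ` this gives `g(x, y) ≤ g(y, y) ≤ C_g`.

Upper bound: on the unit ball use `g ≤ C_g`; on the dyadic annulus `2^j < d(x, y) ≤ 2^(j+1)` use
`g ≤ C_g 2^(-jν)` and `λ(B(x, 2^(j+1))) ≤ C_V 2^((j+1)α)`, so the annuli contribute a geometric
series in `2^(jβ)`, which is `O(R^β)`.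

Lower bound: with `U = B(x, R)` and `d(x, y) ≤ σR`, every `z ∉ U` has `d(z, y) ≥ R/2`, so
`g_U(x, y) ≥ c_g (σR)^(-ν) - C_g (R/2)^(-ν) ≥ c_g (σR)^(-ν) / 2` once `σ` is small. Summing over
`1 ≤ d(x, y) ≤ σR` gives `≳ (σR)^(-ν) (σR)^α ≍ R^β` for large `R`; for bounded `R` the
`n = 0` term at `y = x` already contributes `1`.
-/

open Finset

section

variable {V : Type*}

theorem nstep_zero [DecidableEq V] (q : V → V → ℝ) (x y : V) :
    nstep q 0 x y = if x = y then 1 else 0 := by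
  simp only [nstep]; congr

section killedKernel

variable {p : V → V → ℝ} {U : Set V}

theorem killedKernel_nonneg (hp : ∀ x y, 0 ≤ p x y) (x y : V) : 0 ≤ killedKernel p U x y := by
  unfold killedKernel; split_ifs <;> simp [hp]

theorem killedKernel_le (hp : ∀ x y, 0 ≤ p x y) (x y : V) : killedKernel p U x y ≤ p x y := by
  unfold killedKernel; split_ifs <;> simp [hp]

theorem killedKernel_eq_zero_of_not_adj {G : SimpleGraph V}
    (hp : ∀ x y, ¬ G.Adj x y → p x y = 0) (x y : V) (h : ¬ G.Adj x y) :
    killedKernel p U x y = 0 := by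
  unfold killedKernel; split_ifs <;> simp [hp x y h]

theorem nstep_killedKernel_of_not_mem {x y : V} (hy : y ∉ U) (hxy : x ≠ y) :
    ∀ n, nstep (killedKernel p U) n x y = 0
  | 0 => by classical rw [nstep_zero, if_neg hxy]
  | n + 1 => by simp [nstep, killedKernel, hy]

end killedKernel

structure IsSubMarkovKernel (G : SimpleGraph V) [∀ v, Fintype (G.neighborSet v)]
    (p : V → V → ℝ) : Prop where
  nonneg : ∀ x y, 0 ≤ p x y
  eq_zero_of_not_adj : ∀ x y, ¬ G.Adj x y → p x y = 0
  sum_le_one : ∀ x, ∑ y ∈ G.neighborFinset x, p x y ≤ 1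

section nstep

variable {G : SimpleGraph V} [∀ v, Fintype (G.neighborSet v)] {q q' : V → V → ℝ}

theorem nstep_succ (hq : ∀ x y, ¬ G.Adj x y → q x y = 0) (n : ℕ) (x y : V) :
    nstep q (n + 1) x y = ∑ z ∈ G.neighborFinset y, nstep q n x z * q z y :=
  tsum_eq_sum fun z hz => by
    rw [hq z y fun h => hz ((G.mem_neighborFinset y z).2 h.symm), mul_zero]

theorem nstep_succ' (hq : ∀ x y, ¬ G.Adj x y → q x y = 0) :
    ∀ (n : ℕ) (x y : V), nstep q (n + 1) x y = ∑ z ∈ G.neighborFinset x, q x z * nstep q n z y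
  | 0, x, y => by
    classical
    by_cases hxy : G.Adj x y
    · simp [nstep_succ hq, nstep_zero, hxy, hxy.symm]
    · simp [nstep_succ hq, nstep_zero, hxy, hq x y hxy]
  | n + 1, x, y => by
    simp_rw [nstep_succ hq (n + 1) x y, nstep_succ' hq n x, sum_mul, nstep_succ hq n _ y, mul_sum]
    rw [sum_comm]
    simp_rw [mul_assoc]

theorem nstep_nonneg (hq : ∀ x y, 0 ≤ q x y) : ∀ (n : ℕ) (x y : V), 0 ≤ nstep q n x y
  | 0, x, y => by classical rw [nstep_zero]; split_ifs <;> norm_num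
  | n + 1, x, y => tsum_nonneg fun z => mul_nonneg (nstep_nonneg hq n x z) (hq z y)

theorem nstep_mono (hq : ∀ x y, 0 ≤ q x y) (hqq' : ∀ x y, q x y ≤ q' x y)
    (hq' : ∀ x y, ¬ G.Adj x y → q' x y = 0) :
    ∀ (n : ℕ) (x y : V), nstep q n x y ≤ nstep q' n x y
  | 0, x, y => le_rfl
  | n + 1, x, y => by
    have hqG : ∀ x y, ¬ G.Adj x y → q x y = 0 := fun x y h =>
      le_antisymm (hq' x y h ▸ hqq' x y) (hq x y)
    rw [nstep_succ hqG, nstep_succ hq']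
    exact sum_le_sum fun z _ => mul_le_mul (nstep_mono hq hqq' hq' n x z) (hqq' z y) (hq z y)
      ((nstep_nonneg hq n x z).trans (nstep_mono hq hqq' hq' n x z))

end nstep

namespace IsSubMarkovKernel

variable {G : SimpleGraph V} [∀ v, Fintype (G.neighborSet v)] {p : V → V → ℝ}

theorem summable_nstep_killedKernel (hp : IsSubMarkovKernel G p) (U : Set V) {x y : V}
    (h : Summable fun n => nstep p n x y) : Summable fun n => nstep (killedKernel p U) n x y :=
  h.of_nonneg_of_le (fun n => nstep_nonneg (killedKernel_nonneg hp.nonneg) n x y)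
    (fun n => nstep_mono (killedKernel_nonneg hp.nonneg) (killedKernel_le hp.nonneg)
      hp.eq_zero_of_not_adj n x y)

theorem tsum_nstep_le_tsum_nstep_killedKernel_add (hp : IsSubMarkovKernel G p) {U : Set V}
    {y : V} (hy : ∀ x, Summable fun n => nstep p n x y) {M : ℝ} (hM0 : 0 ≤ M)
    (hM : ∀ z ∉ U, ∑' n, nstep p n z y ≤ M) {x : V} (hx : x ∈ U) :
    ∑' n, nstep p n x y ≤ ∑' n, nstep (killedKernel p U) n x y + M := by
  classical
  set k := killedKernel p U
  have hk : ∀ x y, ¬ G.Adj x y → k x y = 0 :=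
    killedKernel_eq_zero_of_not_adj hp.eq_zero_of_not_adj
  suffices hpartial : ∀ N, ∀ x ∈ U,
      ∑ n ∈ range N, nstep p n x y ≤ ∑ n ∈ range N, nstep k n x y + M by
    refine Real.tsum_le_of_sum_range_le (fun n => nstep_nonneg hp.nonneg n x y) fun N => ?_
    refine (hpartial N x hx).trans (add_le_add_left ?_ M)
    exact (hp.summable_nstep_killedKernel U (hy x)).sum_le_tsum _
      fun n _ => nstep_nonneg (killedKernel_nonneg hp.nonneg) n x y
  intro N
  induction N with
  | zero => intro x _; simpa using hM0
  | succ N ih =>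
    intro x hx
    let f z := if z ∈ U then ∑ n ∈ range N, nstep k n z y else 0
    have hf : ∀ z, ∑ n ∈ range N, nstep p n z y ≤ f z + M := by
      intro z
      by_cases hz : z ∈ U
      · simpa [f, hz] using ih z hz
      · simpa [f, hz] using ((hy z).sum_le_tsum _ fun n _ => nstep_nonneg hp.nonneg n z y).trans
          (hM z hz)
    have hkf : ∀ z, k x z * ∑ n ∈ range N, nstep k n z y = p x z * f z := by
      intro z
      by_cases hz : z ∈ U <;> simp [k, f, killedKernel, hx, hz]
    calc ∑ n ∈ range (N + 1), nstep p n x y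
        = ∑ z ∈ G.neighborFinset x, p x z * ∑ n ∈ range N, nstep p n z y + nstep p 0 x y := by
          simp_rw [sum_range_succ', nstep_succ' hp.eq_zero_of_not_adj, mul_sum]
          rw [sum_comm]
      _ ≤ ∑ z ∈ G.neighborFinset x, p x z * (f z + M) + nstep p 0 x y := by
          gcongr with z
          · exact hp.nonneg x z
          · exact hf z
      _ ≤ ∑ z ∈ G.neighborFinset x, k x z * ∑ n ∈ range N, nstep k n z y + nstep k 0 x y + M := by
          simp_rw [hkf, mul_add, sum_add_distrib, ← sum_mul]
          have := mul_le_of_le_one_left hM0 (hp.sum_le_one x)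
          simp only [nstep]
          linarith
      _ = ∑ n ∈ range (N + 1), nstep k n x y + M := by
          rw [sum_range_succ']
          simp_rw [nstep_succ' hk, mul_sum]
          rw [sum_comm]

end IsSubMarkovKernel

section green

variable {p : V → V → ℝ} {lam : V → ℝ} {U : Set V} {x y : V}

theorem mul_green (hy : lam y ≠ 0) : lam y * green p lam x y = ∑' n, nstep p n x y := by
  rw [green, one_div, mul_inv_cancel_left₀ hy]

theorem mul_killedGreen (hy : lam y ≠ 0) :
    lam y * killedGreen p lam U x y = ∑' n, nstep (killedKernel p U) n x y := by
  rw [killedGreen, one_div, mul_inv_cancel_left₀ hy]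

theorem killedGreen_eq_zero_of_not_mem (hy : y ∉ U) (hxy : x ≠ y) :
    killedGreen p lam U x y = 0 := by
  simp [killedGreen, nstep_killedKernel_of_not_mem hy hxy]

variable {G : SimpleGraph V} [∀ v, Fintype (G.neighborSet v)]

namespace IsSubMarkovKernel

theorem killedGreen_le_green (hp : IsSubMarkovKernel G p) (hxy : Summable fun n => nstep p n x y)
    (hy : 0 ≤ lam y) : killedGreen p lam U x y ≤ green p lam x y :=
  mul_le_mul_of_nonneg_left
    ((hp.summable_nstep_killedKernel U hxy).tsum_le_tsum
      (nstep_mono (killedKernel_nonneg hp.nonneg) (killedKernel_le hp.nonneg)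
        hp.eq_zero_of_not_adj · x y) hxy)
    (one_div_nonneg.2 hy)

theorem one_le_mul_killedGreen_self (hp : IsSubMarkovKernel G p)
    (hxx : Summable fun n => nstep p n x x) (hlam : lam x ≠ 0) :
    1 ≤ lam x * killedGreen p lam U x x := by
  rw [mul_killedGreen hlam]
  calc (1 : ℝ) = nstep (killedKernel p U) 0 x x := by classical simp [nstep_zero]
    _ ≤ _ := (hp.summable_nstep_killedKernel U hxx).le_tsum 0
      fun n _ => nstep_nonneg (killedKernel_nonneg hp.nonneg) n x x

theorem green_le_killedGreen_add (hp : IsSubMarkovKernel G p)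
    (hy : ∀ z, Summable fun n => nstep p n z y) (hlam : 0 < lam y) {M : ℝ} (hM0 : 0 ≤ M)
    (hM : ∀ z ∉ U, green p lam z y ≤ M) (hx : x ∈ U) :
    green p lam x y ≤ killedGreen p lam U x y + M := by
  refine le_of_mul_le_mul_left ?_ hlam
  rw [mul_add, mul_green hlam.ne', mul_killedGreen hlam.ne']
  refine hp.tsum_nstep_le_tsum_nstep_killedKernel_add hy (by positivity) (fun z hz => ?_) hx
  rw [← mul_green hlam.ne']
  exact mul_le_mul_of_nonneg_left (hM z hz) hlam.le

theorem green_le_green_self (hp : IsSubMarkovKernel G p)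
    (hy : ∀ z, Summable fun n => nstep p n z y) (hlam : 0 < lam y) (x : V) :
    green p lam x y ≤ green p lam y y := by
  obtain rfl | hxy := eq_or_ne x y
  · exact le_rfl
  have hM0 : 0 ≤ green p lam y y := by
    rw [← mul_le_mul_iff_of_pos_left hlam, mul_zero, mul_green hlam.ne']
    exact tsum_nonneg fun n => nstep_nonneg hp.nonneg n y y
  have h := hp.green_le_killedGreen_add hy hlam hM0 (U := {y}ᶜ) (fun z hz => by
    rw [Set.notMem_compl_iff.1 hz]) hxy
  rwa [killedGreen_eq_zero_of_not_mem (by simp) hxy, zero_add] at h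

end IsSubMarkovKernel

end green

section Balls

variable {ι : Type*} {B : ℝ → Finset ι} {r m : ι → ℝ} {α β CV : ℝ}

theorem nonneg_of_sum_ball_le (hm : ∀ i, 0 ≤ m i)
    (hvol : ∀ L, 1 ≤ L → ∑ i ∈ B L, m i ≤ CV * L ^ α) : 0 ≤ CV := by
  simpa using (sum_nonneg fun i _ => hm i).trans (hvol 1 le_rfl)

theorem sum_ball_pow_two_mul_rpow_neg_le (hB : ∀ L i, i ∈ B L ↔ r i ≤ L) (hm : ∀ i, 0 ≤ m i)
    (hvol : ∀ L, 1 ≤ L → ∑ i ∈ B L, m i ≤ CV * L ^ α) (hβ : 0 < β) (hβα : β ≤ α) (N : ℕ) :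
    ∑ i ∈ B (2 ^ N) with 1 < r i, m i * r i ^ (-(α - β))
      ≤ CV * 2 ^ α / (2 ^ β - 1) * ((2 : ℝ) ^ N) ^ β := by
  have hCV := nonneg_of_sum_ball_le hm hvol
  have h2β : 0 < (2 : ℝ) ^ β - 1 := by
    linarith [Real.one_lt_rpow (by norm_num : (1 : ℝ) < 2) hβ]
  induction N with
  | zero =>
    rw [sum_eq_zero fun i hi => ?_]
    · positivity
    simp only [pow_zero, mem_filter, hB] at hi
    linarith [hi.1, hi.2]
  | succ N ih =>
    set t : ℝ := 2 ^ N with ht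
    have ht1 : 1 ≤ t := one_le_pow₀ one_le_two
    have hinner : ((B (2 ^ (N + 1))).filter fun i => 1 < r i).filter fun i => r i ≤ t =
        (B t).filter (fun i => 1 < r i) := by
      ext i
      simp only [mem_filter, hB, pow_succ]
      constructor
      · rintro ⟨⟨-, h1⟩, h⟩
        exact ⟨h, h1⟩
      · rintro ⟨h, h1⟩
        exact ⟨⟨by linarith, h1⟩, h⟩
    have houter : ∑ i ∈ ((B (2 ^ (N + 1))).filter fun i => 1 < r i).filter fun i => ¬ r i ≤ t,
        m i * r i ^ (-(α - β)) ≤ CV * 2 ^ α * t ^ β := by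
      have hν : -(α - β) ≤ 0 := by linarith
      calc ∑ i ∈ ((B (2 ^ (N + 1))).filter fun i => 1 < r i).filter fun i => ¬ r i ≤ t,
            m i * r i ^ (-(α - β))
          ≤ ∑ i ∈ ((B (2 ^ (N + 1))).filter fun i => 1 < r i).filter fun i => ¬ r i ≤ t,
            m i * t ^ (-(α - β)) := by
            refine sum_le_sum fun i hi => mul_le_mul_of_nonneg_left ?_ (hm i)
            exact Real.rpow_le_rpow_of_nonpos (by positivity)
              (le_of_not_ge (mem_filter.1 hi).2) hν
        _ ≤ (∑ i ∈ B (2 * t), m i) * t ^ (-(α - β)) := by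
            rw [sum_mul, ← pow_succ']
            exact sum_le_sum_of_subset_of_nonneg (filter_subset _ _ |>.trans (filter_subset _ _))
              fun i _ _ => mul_nonneg (hm i) (by positivity)
        _ ≤ CV * (2 * t) ^ α * t ^ (-(α - β)) := by
            gcongr
            exact hvol _ (by linarith)
        _ = CV * 2 ^ α * t ^ β := by
            rw [Real.mul_rpow two_pos.le (by positivity), mul_assoc, mul_assoc, mul_assoc,
              ← Real.rpow_add (by positivity)]
            ring_nf
    rw [← sum_filter_add_sum_filter_not _ (fun i => r i ≤ t), hinner]
    calc _ ≤ CV * 2 ^ α / (2 ^ β - 1) * t ^ β + CV * 2 ^ α * t ^ β := add_le_add ih houter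
      _ = CV * 2 ^ α / (2 ^ β - 1) * (2 * t) ^ β := by
          rw [Real.mul_rpow two_pos.le (by positivity)]
          field_simp
          ring
      _ = _ := by rw [pow_succ', ht]

theorem sum_ball_mul_rpow_neg_le (hB : ∀ L i, i ∈ B L ↔ r i ≤ L) (hm : ∀ i, 0 ≤ m i)
    (hvol : ∀ L, 1 ≤ L → ∑ i ∈ B L, m i ≤ CV * L ^ α) (hβ : 0 < β) (hβα : β ≤ α)
    {R : ℝ} (hR : 1 ≤ R) :
    ∑ i ∈ B R with 1 < r i, m i * r i ^ (-(α - β)) ≤ CV * 2 ^ α / (2 ^ β - 1) * (2 * R) ^ β := by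
  have hCV := nonneg_of_sum_ball_le hm hvol
  have h2β : 0 < (2 : ℝ) ^ β - 1 := by
    linarith [Real.one_lt_rpow (by norm_num : (1 : ℝ) < 2) hβ]
  obtain ⟨n, hnR, hRn⟩ := exists_nat_pow_near hR one_lt_two
  calc ∑ i ∈ B R with 1 < r i, m i * r i ^ (-(α - β))
      ≤ ∑ i ∈ B (2 ^ (n + 1)) with 1 < r i, m i * r i ^ (-(α - β)) := by
        refine sum_le_sum_of_subset_of_nonneg (fun i => ?_) fun i hi _ => ?_
        · simp only [mem_filter, hB]
          exact fun h => ⟨h.1.trans hRn.le, h.2⟩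
        · exact mul_nonneg (hm i) (Real.rpow_nonneg (by linarith [(mem_filter.1 hi).2]) _)
    _ ≤ CV * 2 ^ α / (2 ^ β - 1) * ((2 : ℝ) ^ (n + 1)) ^ β :=
        sum_ball_pow_two_mul_rpow_neg_le hB hm hvol hβ hβα (n + 1)
    _ ≤ CV * 2 ^ α / (2 ^ β - 1) * (2 * R) ^ β := by
        gcongr
        rw [pow_succ']
        linarith

theorem sum_ball_mul_le (hB : ∀ L i, i ∈ B L ↔ r i ≤ L) (hm : ∀ i, 0 ≤ m i)
    (hvol : ∀ L, 1 ≤ L → ∑ i ∈ B L, m i ≤ CV * L ^ α) (hβ : 0 < β) (hβα : β ≤ α)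
    {g : ι → ℝ} {Cg : ℝ} (hCg : 0 ≤ Cg) (hg : ∀ i, r i ≤ 1 → g i ≤ Cg)
    (hg' : ∀ i, 1 < r i → g i ≤ Cg * r i ^ (-(α - β))) {R : ℝ} (hR : 1 ≤ R) :
    ∑ i ∈ B R, m i * g i ≤ Cg * CV * (1 + 2 ^ α * 2 ^ β / (2 ^ β - 1)) * R ^ β := by
  have hCV := nonneg_of_sum_ball_le hm hvol
  have hRβ : 1 ≤ R ^ β := Real.one_le_rpow hR hβ.le
  have hnear : ∑ i ∈ B R with r i ≤ 1, m i * g i ≤ Cg * CV := by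
    calc ∑ i ∈ B R with r i ≤ 1, m i * g i ≤ ∑ i ∈ B 1, m i * Cg := by
          refine (sum_le_sum fun i hi => mul_le_mul_of_nonneg_left (hg i (mem_filter.1 hi).2)
            (hm i)).trans (sum_le_sum_of_subset_of_nonneg (fun i hi => ?_) fun i _ _ => ?_)
          · exact (hB 1 i).2 (mem_filter.1 hi).2
          · exact mul_nonneg (hm i) hCg
      _ ≤ Cg * CV := by
          rw [← sum_mul, mul_comm]
          simpa using mul_le_mul_of_nonneg_left (hvol 1 le_rfl) hCg
  have hfar : ∑ i ∈ B R with ¬ r i ≤ 1, m i * g i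
      ≤ Cg * (CV * 2 ^ α / (2 ^ β - 1) * (2 * R) ^ β) := by
    simp_rw [not_le]
    calc ∑ i ∈ B R with 1 < r i, m i * g i
        ≤ ∑ i ∈ B R with 1 < r i, Cg * (m i * r i ^ (-(α - β))) := by
          refine sum_le_sum fun i hi => ?_
          rw [mul_left_comm]
          exact mul_le_mul_of_nonneg_left (hg' i (mem_filter.1 hi).2) (hm i)
      _ ≤ _ := by
          rw [← mul_sum]
          exact mul_le_mul_of_nonneg_left (sum_ball_mul_rpow_neg_le hB hm hvol hβ hβα hR) hCg
  rw [← sum_filter_add_sum_filter_not _ (fun i => r i ≤ 1)]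
  rw [Real.mul_rpow two_pos.le (by linarith)] at hfar
  calc _ ≤ Cg * CV + Cg * (CV * 2 ^ α / (2 ^ β - 1) * (2 ^ β * R ^ β)) := add_le_add hnear hfar
    _ ≤ Cg * CV * R ^ β + Cg * (CV * 2 ^ α / (2 ^ β - 1) * (2 ^ β * R ^ β)) :=
      add_le_add_left (le_mul_of_one_le_right (mul_nonneg hCg hCV) hRβ) _
    _ = _ := by ring

theorem mul_sub_le_sum_ball (hB : ∀ L i, i ∈ B L ↔ r i ≤ L) (hm : ∀ i, 0 ≤ m i) {f : ι → ℝ}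
    (hf : ∀ i, 0 ≤ f i) {a ρ R : ℝ} (ha : 0 ≤ a) (hρR : ρ ≤ R)
    (hfm : ∀ i, 1 ≤ r i → r i ≤ ρ → a * m i ≤ f i) :
    a * (∑ i ∈ B ρ, m i - ∑ i ∈ B 1, m i) ≤ ∑ i ∈ B R, f i := by
  have hcore : ∑ i ∈ B ρ, m i - ∑ i ∈ B 1, m i ≤ ∑ i ∈ B ρ with 1 ≤ r i, m i := by
    rw [← sum_filter_add_sum_filter_not (B ρ) (fun i => 1 ≤ r i), add_sub_assoc]
    refine add_le_of_nonpos_right (sub_nonpos.2 (sum_le_sum_of_subset_of_nonneg ?_ ?_))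
    · intro i hi
      rw [hB]
      exact (not_le.1 (mem_filter.1 hi).2).le
    · exact fun i _ _ => hm i
  calc a * (∑ i ∈ B ρ, m i - ∑ i ∈ B 1, m i) ≤ ∑ i ∈ B ρ with 1 ≤ r i, a * m i := by
        rw [← mul_sum]
        exact mul_le_mul_of_nonneg_left hcore ha
    _ ≤ ∑ i ∈ B ρ with 1 ≤ r i, f i := by
        refine sum_le_sum fun i hi => ?_
        rw [mem_filter, hB] at hi
        exact hfm i hi.2 hi.1
    _ ≤ ∑ i ∈ B R, f i := by
        refine sum_le_sum_of_subset_of_nonneg (fun i hi => ?_) fun i _ _ => hf i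
        rw [mem_filter, hB] at hi
        rw [hB]
        linarith [hi.1]

end Balls

open Filter Topology in
theorem exists_pos_le_half_le_mul_rpow_neg {ν : ℝ} (hν : 0 < ν) (a : ℝ) {b : ℝ} (hb : 0 < b) :
    ∃ σ, 0 < σ ∧ σ ≤ 1 / 2 ∧ a ≤ b * σ ^ (-ν) := by
  have hsmall : ∀ᶠ σ in 𝓝[>] 0, σ ∈ Set.Ioc 0 (1 / 2) ∧ a / b ≤ σ ^ (-ν) :=
    Eventually.and (Ioc_mem_nhdsGT one_half_pos)
      ((tendsto_rpow_neg_nhdsGT_zero (neg_neg_of_pos hν)).eventually_ge_atTop _)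
  obtain ⟨σ, ⟨hσ, hσ2⟩, hσa⟩ := hsmall.exists
  exact ⟨σ, hσ, hσ2, (div_le_iff₀' hb).1 hσa⟩

theorem exists_pos_mul_rpow_le {X : Type*} {S : X → ℝ → ℝ} {a β : ℝ} (ha : 0 < a) (hβ : 0 ≤ β)
    (hS : ∀ x R, 1 ≤ R → 1 ≤ S x R) (hlarge : ∀ᶠ R in Filter.atTop, ∀ x, a * R ^ β ≤ S x R) :
    ∃ c, 0 < c ∧ ∀ x R, 1 ≤ R → c * R ^ β ≤ S x R := by
  obtain ⟨R₀, hR₀⟩ := Filter.eventually_atTop.1 hlarge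
  set R₁ := max R₀ 1
  have hR₁ : 0 < R₁ := lt_max_of_lt_right one_pos
  refine ⟨min a (R₁ ^ (-β)), lt_min ha (by positivity), fun x R hR => ?_⟩
  rcases le_total R R₁ with hRR₁ | hR₁R
  · calc min a (R₁ ^ (-β)) * R ^ β ≤ R₁ ^ (-β) * R₁ ^ β := by
          gcongr
          · exact min_le_right _ _
      _ = 1 := by rw [← Real.rpow_add hR₁, neg_add_cancel, Real.rpow_zero]
      _ ≤ S x R := hS x R hR
  · exact (mul_le_mul_of_nonneg_right (min_le_left _ _) (by positivity)).trans
      (hR₀ R ((le_max_left _ _).trans hR₁R) x)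

section Graph

variable {G : SimpleGraph V} [∀ v, Fintype (G.neighborSet v)] {p : V → V → ℝ} {lam : V → ℝ}

theorem isSubMarkovKernel_of_conductance {w : V → V → ℝ} (hw_nonneg : ∀ x y, 0 ≤ w x y)
    (hw_adj : ∀ x y, 0 < w x y ↔ G.Adj x y) (hlam : ∀ x, lam x = ∑ y ∈ G.neighborFinset x, w x y)
    (hp : ∀ x y, p x y = w x y / lam x) : IsSubMarkovKernel G p where
  nonneg x y := by
    rw [hp, hlam]
    exact div_nonneg (hw_nonneg x y) (sum_nonneg fun z _ => hw_nonneg x z)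
  eq_zero_of_not_adj x y h := by
    rw [hp, le_antisymm (not_lt.1 (mt (hw_adj x y).1 h)) (hw_nonneg x y), zero_div]
  sum_le_one x := by
    simp_rw [hp, ← sum_div, ← hlam]
    exact div_self_le_one _

theorem IsSubMarkovKernel.le_killedGreen_ball (hp : IsSubMarkovKernel G p) {y : V}
    (hy : ∀ z, Summable fun n => nstep p n z y) (hlam : 0 < lam y) {d : V → V → ℝ}
    (hd_symm : ∀ x y, d x y = d y x) (hd_self : ∀ x, d x x = 0)
    (hd_tri : ∀ x y z, d x z ≤ d x y + d y z) {ν cg Cg : ℝ} (hν : 0 < ν) (hcg : 0 ≤ cg)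
    (hCg : 0 ≤ Cg)
    (hGoff : ∀ x y : V, x ≠ y →
      cg * d x y ^ (-ν) ≤ green p lam x y ∧ green p lam x y ≤ Cg * d x y ^ (-ν))
    {σ R : ℝ} (hσ : 0 < σ) (hσ2 : σ ≤ 1 / 2) (hσC : Cg * 2 ^ ν ≤ cg / 2 * σ ^ (-ν))
    {x : V} (hxy1 : 1 ≤ d x y) (hxyσ : d x y ≤ σ * R) :
    cg / 2 * (σ * R) ^ (-ν) ≤ killedGreen p lam {v | d x v ≤ R} x y := by
  have hR : 0 < R := pos_of_mul_pos_right (one_pos.trans_le (hxy1.trans hxyσ)) hσ.le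
  have hxy : x ≠ y := by
    rintro rfl
    linarith [hd_self x]
  have hexit : ∀ z ∉ {v | d x v ≤ R}, green p lam z y ≤ Cg * (R / 2) ^ (-ν) := by
    intro z hz
    have hzy : R / 2 ≤ d z y := by
      have := hd_tri x y z
      rw [hd_symm y z] at this
      simp only [Set.mem_ofPred_eq, not_le] at hz
      nlinarith
    have hzy' : z ≠ y := by
      rintro rfl
      exact hz (hxyσ.trans (by nlinarith))
    refine (hGoff z y hzy').2.trans (mul_le_mul_of_nonneg_left ?_ hCg)
    exact Real.rpow_le_rpow_of_nonpos (by positivity) hzy (by linarith)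
  have hfirst := hp.green_le_killedGreen_add hy hlam (by positivity) hexit
    (show d x x ≤ R by linarith [hd_self x])
  have hnear : cg * (σ * R) ^ (-ν) ≤ green p lam x y :=
    (mul_le_mul_of_nonneg_left (Real.rpow_le_rpow_of_nonpos (by linarith) hxyσ (by linarith))
      hcg).trans (hGoff x y hxy).1
  have hexit' : Cg * (R / 2) ^ (-ν) ≤ cg / 2 * (σ * R) ^ (-ν) := by
    rw [Real.div_rpow hR.le zero_le_two, Real.rpow_neg zero_le_two ν, div_inv_eq_mul,
      Real.mul_rpow hσ.le hR.le]
    linarith [mul_le_mul_of_nonneg_right hσC (Real.rpow_nonneg hR.le (-ν))]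
  linarith

open Filter in
theorem IsSubMarkovKernel.exists_pos_mul_rpow_le_sum_killedGreen (hp : IsSubMarkovKernel G p)
    (htrans : ∀ x y, Summable fun n => nstep p n x y) (hlam : ∀ x, 0 < lam x)
    {d : V → V → ℝ} (hd_symm : ∀ x y, d x y = d y x) (hd_self : ∀ x, d x x = 0)
    (hd_tri : ∀ x y z, d x z ≤ d x y + d y z) (hBfin : ∀ (x : V) (L : ℝ), {y | d x y ≤ L}.Finite)
    {α β cV CV : ℝ} (hβ : 0 < β) (hβα : β < α) (hcV : 0 < cV)
    (hVol : ∀ (x : V) (L : ℝ), 1 ≤ L →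
      cV * L ^ α ≤ ∑ y ∈ (hBfin x L).toFinset, lam y ∧
        ∑ y ∈ (hBfin x L).toFinset, lam y ≤ CV * L ^ α)
    {cg Cg : ℝ} (hcg : 0 < cg) (hCg : 0 ≤ Cg)
    (hGoff : ∀ x y : V, x ≠ y →
      cg * d x y ^ (-(α - β)) ≤ green p lam x y ∧ green p lam x y ≤ Cg * d x y ^ (-(α - β))) :
    ∃ c, 0 < c ∧ ∀ (x : V) (R : ℝ), 1 ≤ R →
      c * R ^ β ≤ ∑ y ∈ (hBfin x R).toFinset, lam y * killedGreen p lam {v | d x v ≤ R} x y := by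
  have hν : 0 < α - β := sub_pos.2 hβα
  have hB : ∀ x L y, y ∈ (hBfin x L).toFinset ↔ d x y ≤ L := fun x L y => Set.Finite.mem_toFinset _
  have hkG : ∀ (U : Set V) x y, 0 ≤ lam y * killedGreen p lam U x y := fun U x y => by
    rw [mul_killedGreen (hlam y).ne']
    exact tsum_nonneg fun n => nstep_nonneg (killedKernel_nonneg hp.nonneg) n x y
  obtain ⟨σ, hσ, hσ2, hσC⟩ := exists_pos_le_half_le_mul_rpow_neg hν (Cg * 2 ^ (α - β))
    (half_pos hcg)
  refine exists_pos_mul_rpow_le (a := cg * cV * σ ^ β / 4) (by positivity) hβ.le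
    (fun x R hR => ?_) ?_
  · refine (hp.one_le_mul_killedGreen_self (U := {v | d x v ≤ R}) (htrans x x)
      (hlam x).ne').trans ?_
    exact single_le_sum (fun y _ => hkG _ x y) ((hB x R x).2 (by linarith [hd_self x]))
  have hσR := tendsto_id.const_mul_atTop hσ
  filter_upwards [hσR.eventually_ge_atTop 1,
    ((tendsto_rpow_atTop (hβ.trans hβα)).comp hσR).eventually_ge_atTop (2 * CV / cV)]
    with R hR1 hR2 x
  simp only [id, Function.comp_apply] at hR1 hR2
  rw [div_le_iff₀ hcV] at hR2
  have hR : σ * R ≤ R := by nlinarith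
  have hsum := mul_sub_le_sum_ball (hB x) (fun y => (hlam y).le) (hkG _ x)
    (a := cg / 2 * (σ * R) ^ (-(α - β))) (by positivity) hR fun y hy1 hyσ => by
      rw [mul_comm]
      exact mul_le_mul_of_nonneg_left (hp.le_killedGreen_ball (htrans · y) (hlam y) hd_symm
        hd_self hd_tri hν hcg.le hCg hGoff hσ hσ2 hσC hy1 hyσ) (hlam y).le
  have hvol := (hVol x (σ * R) hR1).1
  have hvol1 := (hVol x 1 le_rfl).2
  rw [Real.one_rpow, mul_one] at hvol1
  refine le_trans ?_ hsum
  calc cg * cV * σ ^ β / 4 * R ^ β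
      = cg / 2 * (σ * R) ^ (-(α - β)) * (cV * (σ * R) ^ α / 2) := by
        rw [mul_assoc (cg / 2), mul_div_assoc', mul_left_comm _ cV, ← Real.rpow_add (by positivity),
          Real.mul_rpow hσ.le (by linarith)]
        ring_nf
    _ ≤ cg / 2 * (σ * R) ^ (-(α - β)) * (∑ y ∈ (hBfin x (σ * R)).toFinset, lam y -
          ∑ y ∈ (hBfin x 1).toFinset, lam y) := by
        gcongr
        linarith

end Graph

end

/-- two-sided bounds of order R^β on the expected exit time of balls,
E_x[T_{B(x,R)}] = Σ_{y∈B(x,R)} λ_y g_{B(x,R)}(x,y). -/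
theorem expected_exit_time_bounds
    {V : Type*} (G : SimpleGraph V) [∀ v : V, Fintype (G.neighborSet v)] [Infinite V]
    (hconn : G.Connected)
    (w : V → V → ℝ) (lam : V → ℝ) (p : V → V → ℝ) (d : V → V → ℝ)
    (hw_symm : ∀ x y, w x y = w y x)
    (hw_nonneg : ∀ x y, 0 ≤ w x y)
    (hw_adj : ∀ x y, 0 < w x y ↔ G.Adj x y)
    (hlam : ∀ x, lam x = ∑ y ∈ G.neighborFinset x, w x y)
    (hp : ∀ x y, p x y = w x y / lam x)
    (htrans : ∀ x y, Summable (fun n => nstep p n x y))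
    (c₀ : ℝ) (hc₀ : 0 < c₀) (hp₀ : ∀ x y, G.Adj x y → c₀ ≤ p x y)
    (hd_symm : ∀ x y, d x y = d y x)
    (hd_self : ∀ x, d x x = 0)
    (hd_nonneg : ∀ x y, 0 ≤ d x y)
    (hd_tri : ∀ x y z, d x z ≤ d x y + d y z)
    (hBfin : ∀ (x : V) (L : ℝ), {y | d x y ≤ L}.Finite)
    (α β : ℝ) (hα : 2 < α) (hβ₂ : 2 ≤ β) (hβα : β < α)
    (cV CV : ℝ) (hcV : 0 < cV)
    (hVol : ∀ (x : V) (L : ℝ), 1 ≤ L →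
      cV * L ^ α ≤ ∑ y ∈ (hBfin x L).toFinset, lam y ∧
        ∑ y ∈ (hBfin x L).toFinset, lam y ≤ CV * L ^ α)
    (cg Cg : ℝ) (hcg : 0 < cg)
    (hGdiag : ∀ x : V, cg ≤ green p lam x x ∧ green p lam x x ≤ Cg)
    (hGoff : ∀ x y : V, x ≠ y →
      cg * d x y ^ (-(α - β)) ≤ green p lam x y ∧
        green p lam x y ≤ Cg * d x y ^ (-(α - β))) :
    ∃ c C : ℝ, 0 < c ∧ 0 < C ∧ ∀ (x : V) (R : ℝ), 1 ≤ R →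
      c * R ^ β ≤ ∑ y ∈ (hBfin x R).toFinset, lam y * killedGreen p lam {v | d x v ≤ R} x y ∧
      (∑ y ∈ (hBfin x R).toFinset, lam y * killedGreen p lam {v | d x v ≤ R} x y ≤
        ∑ y ∈ (hBfin x R).toFinset, lam y * green p lam x y) ∧
      ∑ y ∈ (hBfin x R).toFinset, lam y * green p lam x y ≤ C * R ^ β := by
  obtain ⟨x₀⟩ : Nonempty V := inferInstance
  have hP := isSubMarkovKernel_of_conductance hw_nonneg hw_adj hlam hp
  -- since `1 / 0 = 0`, `lam x = 0` would force `green p lam x x = 0 < cg`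
  have hlam_pos : ∀ x, 0 < lam x := fun x => by
    refine lt_of_le_of_ne ((hlam x).symm ▸ sum_nonneg fun y _ => hw_nonneg x y) fun h => ?_
    simpa [green, ← h, not_le.2 hcg] using (hGdiag x).1
  have hCg : 0 < Cg := hcg.trans_le ((hGdiag x₀).1.trans (hGdiag x₀).2)
  have hCV : 0 < CV := by
    have := (hVol x₀ 1 le_rfl).1.trans (hVol x₀ 1 le_rfl).2
    rw [Real.one_rpow, mul_one, mul_one] at this
    linarith
  have hβ : 0 < β := by linarith
  have h2β : 0 < (2 : ℝ) ^ β - 1 := sub_pos.2 (Real.one_lt_rpow one_lt_two hβ)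
  obtain ⟨c, hc, hlower⟩ := hP.exists_pos_mul_rpow_le_sum_killedGreen htrans hlam_pos hd_symm
    hd_self hd_tri hBfin hβ hβα hcV hVol hcg hCg.le hGoff
  refine ⟨c, Cg * CV * (1 + 2 ^ α * 2 ^ β / (2 ^ β - 1)), hc, by positivity,
    fun x R hR => ⟨hlower x R hR, sum_le_sum fun y _ => ?_, ?_⟩⟩
  · exact mul_le_mul_of_nonneg_left (hP.killedGreen_le_green (htrans x y) (hlam_pos y).le)
      (hlam_pos y).le
  refine sum_ball_mul_le (fun L y => Set.Finite.mem_toFinset _) (fun y => (hlam_pos y).le)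
    (fun L hL => (hVol x L hL).2) hβ hβα.le hCg.le
    (fun y _ => (hP.green_le_green_self (htrans · y) (hlam_pos y) x).trans (hGdiag y).2)
    (fun y hy => (hGoff x y fun h => ?_).2) hR
  subst h
  linarith [hd_self x]
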